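/- Let (n, J, ⟨·,·⟩) be a 2-step nilpotent Hermitian Lie algebra with J-invariant center and closed Bismut torsion 3-form (SKT). Then an element Y of n lies in the center of n if and only if [Y, JY] = 0. -/

import Mathlib

/-!
Since `n` is 2-step nilpotent, every bracket is central, and so is its image under `J`. Hence if
`[Y, JY] = 0`, evaluating `dc` at `(Y, JY, JZ, Z)` kills every term involving `J[·,·]` or
`[Y, JY]`, and `J² = -1` turns what is left into
`|[Y,JZ]|² + |[Y,Z]|² + |[JY,JZ]|² + |[JY,Z]|²`. So `dc = 0` forces `[Y, Z] = 0` for all `Z`.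
-/

section LieAlgebra

variable {R L : Type*} [CommRing R] [LieRing L] [LieAlgebra R L]

theorem lie_mem_center_of_lie_lie_eq_zero (h2step : ∀ x y w : L, ⁅⁅x, y⁆, w⁆ = 0) (a b : L) :
    ⁅a, b⁆ ∈ LieAlgebra.center R L :=
  (LieModule.mem_maxTrivSubmodule R L L _).mpr fun m => by rw [← lie_skew, h2step, neg_zero]

theorem lie_map_lie_eq_zero_of_map_center (h2step : ∀ x y w : L, ⁅⁅x, y⁆, w⁆ = 0)
    {J : L →ₗ[R] L} (hJcenter : ∀ x ∈ LieAlgebra.center R L, J x ∈ LieAlgebra.center R L)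
    (a b c : L) : ⁅J ⁅a, b⁆, c⁆ = 0 := by
  have hc := (LieModule.mem_maxTrivSubmodule R L L _).mp
    (hJcenter _ (lie_mem_center_of_lie_lie_eq_zero h2step a b)) c
  rw [← lie_skew, hc, neg_zero]

/-- `dc(W, U, Y, Z)`, with `c(U,Y,Z) = -⟨[JU,JY],Z⟩ - ⟨[JY,JZ],U⟩ - ⟨[JZ,JU],Y⟩`. -/
def bismutTorsionDiff (ip : L →ₗ[R] L →ₗ[R] R) (J : L →ₗ[R] L) (W U Y Z : L) : R :=
  ip ⁅J ⁅W, U⁆, J Y⁆ Z + ip ⁅J Y, J Z⁆ ⁅W, U⁆ + ip ⁅J Z, J ⁅W, U⁆⁆ Y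
    - ip ⁅J ⁅W, Y⁆, J U⁆ Z - ip ⁅J U, J Z⁆ ⁅W, Y⁆ - ip ⁅J Z, J ⁅W, Y⁆⁆ U
    + ip ⁅J ⁅W, Z⁆, J U⁆ Y + ip ⁅J U, J Y⁆ ⁅W, Z⁆ + ip ⁅J Y, J ⁅W, Z⁆⁆ U
    + ip ⁅J ⁅U, Y⁆, J W⁆ Z + ip ⁅J W, J Z⁆ ⁅U, Y⁆ + ip ⁅J Z, J ⁅U, Y⁆⁆ W
    - ip ⁅J ⁅U, Z⁆, J W⁆ Y - ip ⁅J W, J Y⁆ ⁅U, Z⁆ - ip ⁅J Y, J ⁅U, Z⁆⁆ W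
    + ip ⁅J ⁅Y, Z⁆, J W⁆ U + ip ⁅J W, J U⁆ ⁅Y, Z⁆ + ip ⁅J U, J ⁅Y, Z⁆⁆ W

theorem bismutTorsionDiff_self_map_map_self (ip : L →ₗ[R] L →ₗ[R] R) {J : L →ₗ[R] L}
    (hJ2 : ∀ x, J (J x) = -x) (hJlie : ∀ a b c : L, ⁅J ⁅a, b⁆, c⁆ = 0) {Y : L}
    (hY : ⁅Y, J Y⁆ = 0) (Z : L) :
    bismutTorsionDiff ip J Y (J Y) (J Z) Z =
      ip ⁅Y, J Z⁆ ⁅Y, J Z⁆ + ip ⁅Y, Z⁆ ⁅Y, Z⁆ + ip ⁅J Y, J Z⁆ ⁅J Y, J Z⁆ + ip ⁅J Y, Z⁆ ⁅J Y, Z⁆ := by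
  have hJlie' : ∀ a b c : L, ⁅c, J ⁅a, b⁆⁆ = 0 := fun a b c => by
    rw [← lie_skew, hJlie, neg_zero]
  have hY' : ⁅J Y, Y⁆ = 0 := by rw [← lie_skew, hY, neg_zero]
  simp only [bismutTorsionDiff, hJlie, hJlie', hJ2, hY, hY', lie_neg, neg_lie, neg_neg,
    map_neg, map_zero, zero_lie, lie_zero, LinearMap.neg_apply, LinearMap.zero_apply]
  ring

end LieAlgebra

theorem ip_self_eq_zero_of_add_eq_zero {L : Type*} [AddCommGroup L] [Module ℝ L]
    {ip : L →ₗ[ℝ] L →ₗ[ℝ] ℝ} (hpos : ∀ x : L, x ≠ 0 → 0 < ip x x) {x y z w : L}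
    (h : ip x x + ip y y + ip z z + ip w w = 0) : ip y y = 0 := by
  have hnn : ∀ v : L, 0 ≤ ip v v := fun v => by
    rcases eq_or_ne v 0 with rfl | hv
    · simp
    · exact (hpos v hv).le
  linarith [hnn x, hnn y, hnn z, hnn w]

theorem stmt7_general
    (n : Type*) [LieRing n] [LieAlgebra ℝ n]
    (ip : n →ₗ[ℝ] n →ₗ[ℝ] ℝ)
    (hpos : ∀ x : n, x ≠ 0 → 0 < ip x x)
    (J : n →ₗ[ℝ] n)
    (hJ2 : ∀ x, J (J x) = -x)
    (h2step : ∀ x y w : n, ⁅⁅x, y⁆, w⁆ = 0)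
    (hJcenter : ∀ x ∈ LieAlgebra.center ℝ n, J x ∈ LieAlgebra.center ℝ n)
    -- `dc = 0`, where `dc` is the Chevalley–Eilenberg differential of the Bismut torsion
    -- `c(U,Y,Z) = -⟨[JU,JY],Z⟩ - ⟨[JY,JZ],U⟩ - ⟨[JZ,JU],Y⟩`:
    (hSKT : ∀ W U Y Z : n,
        ip ⁅J ⁅W, U⁆, J Y⁆ Z + ip ⁅J Y, J Z⁆ ⁅W, U⁆ + ip ⁅J Z, J ⁅W, U⁆⁆ Y
      - ip ⁅J ⁅W, Y⁆, J U⁆ Z - ip ⁅J U, J Z⁆ ⁅W, Y⁆ - ip ⁅J Z, J ⁅W, Y⁆⁆ U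
      + ip ⁅J ⁅W, Z⁆, J U⁆ Y + ip ⁅J U, J Y⁆ ⁅W, Z⁆ + ip ⁅J Y, J ⁅W, Z⁆⁆ U
      + ip ⁅J ⁅U, Y⁆, J W⁆ Z + ip ⁅J W, J Z⁆ ⁅U, Y⁆ + ip ⁅J Z, J ⁅U, Y⁆⁆ W
      - ip ⁅J ⁅U, Z⁆, J W⁆ Y - ip ⁅J W, J Y⁆ ⁅U, Z⁆ - ip ⁅J Y, J ⁅U, Z⁆⁆ W
      + ip ⁅J ⁅Y, Z⁆, J W⁆ U + ip ⁅J W, J U⁆ ⁅Y, Z⁆ + ip ⁅J U, J ⁅Y, Z⁆⁆ W = 0) :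
    ∀ Y : n, Y ∈ LieAlgebra.center ℝ n ↔ ⁅Y, J Y⁆ = 0 := by
  intro Y
  rw [LieModule.mem_maxTrivSubmodule]
  refine ⟨fun hY => by rw [← lie_skew, hY, neg_zero], fun hY Z => ?_⟩
  have hsum := (bismutTorsionDiff_self_map_map_self ip hJ2
    (lie_map_lie_eq_zero_of_map_center h2step hJcenter) hY Z).symm.trans (hSKT Y (J Y) (J Z) Z)
  have hYZ : ⁅Y, Z⁆ = 0 := by
    by_contra hne
    exact (hpos _ hne).ne' (ip_self_eq_zero_of_add_eq_zero hpos hsum)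
  rw [← lie_skew, hYZ, neg_zero]

/-- For a 2-step nilpotent Hermitian Lie algebra (SKT: with `J`-invariant center
and closed Bismut torsion 3-form), an element `Y` lies in the center iff `[Y, JY] = 0`. -/
theorem stmt7
    (n : Type*) [LieRing n] [LieAlgebra ℝ n] [Module.Finite ℝ n]
    (ip : n →ₗ[ℝ] n →ₗ[ℝ] ℝ)
    (hsymm : ∀ x y, ip x y = ip y x)
    (hpos : ∀ x : n, x ≠ 0 → 0 < ip x x)
    (J : n →ₗ[ℝ] n)
    (hJ2 : ∀ x, J (J x) = -x)
    (hint : ∀ x y : n, ⁅J x, J y⁆ = ⁅x, y⁆ + J ⁅J x, y⁆ + J ⁅x, J y⁆)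
    (hJorth : ∀ x y, ip (J x) (J y) = ip x y)
    (h2step : ∀ x y w : n, ⁅⁅x, y⁆, w⁆ = 0)
    (hJcenter : ∀ x ∈ LieAlgebra.center ℝ n, J x ∈ LieAlgebra.center ℝ n)
    -- `dc = 0`, where `dc` is the Chevalley–Eilenberg differential of the Bismut torsion
    -- `c(U,Y,Z) = -⟨[JU,JY],Z⟩ - ⟨[JY,JZ],U⟩ - ⟨[JZ,JU],Y⟩`:
    (hSKT : ∀ W U Y Z : n,
        ip ⁅J ⁅W, U⁆, J Y⁆ Z + ip ⁅J Y, J Z⁆ ⁅W, U⁆ + ip ⁅J Z, J ⁅W, U⁆⁆ Y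
      - ip ⁅J ⁅W, Y⁆, J U⁆ Z - ip ⁅J U, J Z⁆ ⁅W, Y⁆ - ip ⁅J Z, J ⁅W, Y⁆⁆ U
      + ip ⁅J ⁅W, Z⁆, J U⁆ Y + ip ⁅J U, J Y⁆ ⁅W, Z⁆ + ip ⁅J Y, J ⁅W, Z⁆⁆ U
      + ip ⁅J ⁅U, Y⁆, J W⁆ Z + ip ⁅J W, J Z⁆ ⁅U, Y⁆ + ip ⁅J Z, J ⁅U, Y⁆⁆ W
      - ip ⁅J ⁅U, Z⁆, J W⁆ Y - ip ⁅J W, J Y⁆ ⁅U, Z⁆ - ip ⁅J Y, J ⁅U, Z⁆⁆ W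
      + ip ⁅J ⁅Y, Z⁆, J W⁆ U + ip ⁅J W, J U⁆ ⁅Y, Z⁆ + ip ⁅J U, J ⁅Y, Z⁆⁆ W = 0) :
    ∀ Y : n, Y ∈ LieAlgebra.center ℝ n ↔ ⁅Y, J Y⁆ = 0 :=
  stmt7_general n ip hpos J hJ2 h2step hJcenter hSKT
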